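/- Let p, q be integers with 1 ≤ q ≤ p, let γ be the largest root of x² − px − q, and let G_0 = 1, G_1 = p+1, G_m = p·G_{m−1} + q·G_{m−2}. Then for all integers m ≥ k ≥ 0: |G_{m−k}/G_m − γ^(−k)| < 1/G_m, and the minimum over 0 ≤ i ≤ m of |G_{m−i}/G_m − γ^(−k)| is attained at i = k, i.e. min_{0≤i≤m} |G_{m−i}/G_m − 1/γ^k| = |G_{m−k}/G_m − 1/γ^k|. -/

import Mathlib

open Finset

/-- `γ = (p + √(p² + 4q))/2`, the largest root of `x² − px − q`. -/
noncomputable def gam (p q : ℕ) : ℝ := ((p : ℝ) + Real.sqrt ((p : ℝ) ^ 2 + 4 * q)) / 2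

/-- Condition `R_{p,q}` on the base-`(p+1)` digit expansion of `n`: whenever a digit
equals `p`, the digit immediately to its right is strictly less than `q`. -/
def CondR (p q n : ℕ) : Prop :=
  ∀ j : ℕ, (Nat.digits (p + 1) n).getD (j + 1) 0 = p →
    (Nat.digits (p + 1) n).getD j 0 < q

/-- `n‾ = ∑_j d_j γ^j ∈ ℝ`, where `n = (d_{m−1} … d_1 d_0)_{p+1}`. -/
noncomputable def gbar (p q n : ℕ) : ℝ :=
  ∑ j ∈ Finset.range (Nat.digits (p + 1) n).length,
    ((Nat.digits (p + 1) n).getD j 0 : ℝ) * gam p q ^ j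

/-- `G_0 = 1`, `G_1 = p + 1`, `G_m = p·G_{m−1} + q·G_{m−2}`. -/
def G (p q : ℕ) : ℕ → ℕ
  | 0 => 1
  | 1 => p + 1
  | (m + 2) => p * G p q (m + 1) + q * G p q m

/-! Binet's formula writes `G n` as `A γⁿ + B δⁿ` with `δ = p − γ`, and `q ≤ p` forces
`δ ∈ [-1, 0]`. Hence `G (m - k) - G m γ^(-k) = B (δ^(m-k) - δ^m γ^(-k))`, which has absolute
value at most `2|B| < 1/2`. Since all `G (m - i)` are integers, the one at distance `< 1/2` from
`G m γ^(-k)` is a closest one. -/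

/-- The conjugate root `δ = p − γ` of `x² − px − q`. -/
noncomputable def gamConj (p q : ℕ) : ℝ := p - gam p q

section Roots

variable (p q : ℕ)

lemma sq_sqrt_disc : Real.sqrt ((p : ℝ) ^ 2 + 4 * q) ^ 2 = (p : ℝ) ^ 2 + 4 * q :=
  Real.sq_sqrt (by positivity)

lemma gam_sq : gam p q ^ 2 = p * gam p q + q := by
  unfold gam; linear_combination sq_sqrt_disc p q / 4

lemma gamConj_sq : gamConj p q ^ 2 = p * gamConj p q + q := by
  unfold gamConj; linear_combination gam_sq p q

variable {p q}

lemma one_le_gam (hq : 1 ≤ q) : 1 ≤ gam p q := by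
  have hq' : (1 : ℝ) ≤ q := by exact_mod_cast hq
  have : 2 ≤ Real.sqrt ((p : ℝ) ^ 2 + 4 * q) := Real.le_sqrt_of_sq_le (by nlinarith)
  unfold gam; linarith [(Nat.cast_nonneg p : (0 : ℝ) ≤ p)]

lemma gamConj_nonpos : gamConj p q ≤ 0 := by
  have := sq_sqrt_disc p q
  have := Real.sqrt_nonneg ((p : ℝ) ^ 2 + 4 * q)
  unfold gamConj gam; nlinarith

lemma neg_one_le_gamConj (hpq : q ≤ p) : -1 ≤ gamConj p q := by
  have hpq' : (q : ℝ) ≤ p := by exact_mod_cast hpq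
  have := sq_sqrt_disc p q
  have := Real.sqrt_nonneg ((p : ℝ) ^ 2 + 4 * q)
  unfold gamConj gam; nlinarith

/-- The inequality `2p + 4 < 3√(p² + 4q)`, i.e. `5p² − 16p + 36q − 16 > 0`, in disguise. -/
lemma four_mul_one_add_gamConj_lt (hq : 1 ≤ q) :
    4 * (1 + gamConj p q) < gam p q - gamConj p q := by
  have hq' : (1 : ℝ) ≤ q := by exact_mod_cast hq
  have := sq_sqrt_disc p q
  have := Real.sqrt_nonneg ((p : ℝ) ^ 2 + 4 * q)
  unfold gamConj gam; nlinarith [sq_nonneg (5 * (p : ℝ) - 8)]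

end Roots

namespace G

variable {p q : ℕ}

lemma pos (hq : 1 ≤ q) (n : ℕ) : 0 < G p q n := by
  induction n using Nat.twoStepInduction with
  | zero => simp [G]
  | one => simp [G]
  | more n ih _ => simp only [G]; positivity

variable (p q) in
lemma binet (n : ℕ) :
    (gam p q - gamConj p q) * G p q n =
      (1 + gam p q) * gam p q ^ n - (1 + gamConj p q) * gamConj p q ^ n := by
  induction n using Nat.twoStepInduction with
  | zero => simp [G]
  | one => simp only [G, gamConj]; push_cast; ring
  | more n ih₀ ih₁ =>
    simp only [G]; push_cast
    linear_combination p * ih₁ + q * ih₀ - (1 + gam p q) * gam p q ^ n * gam_sq p q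
      + (1 + gamConj p q) * gamConj p q ^ n * gamConj_sq p q

lemma abs_sub_mul_zpow_gam_lt (hq : 1 ≤ q) (hpq : q ≤ p) {m k : ℕ} (hkm : k ≤ m) :
    |(G p q (m - k) : ℝ) - G p q m * gam p q ^ (-(k : ℤ))| < 1 / 2 := by
  set γ := gam p q
  set δ := gamConj p q
  have hγ : 1 ≤ γ := one_le_gam hq
  have hδ : |δ| ≤ 1 := abs_le.mpr ⟨neg_one_le_gamConj hpq, gamConj_nonpos.trans zero_le_one⟩
  have hsmall := four_mul_one_add_gamConj_lt (p := p) hq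
  have hδ₁ : 0 ≤ 1 + δ := by linarith [neg_one_le_gamConj hpq]
  have hγk : γ ^ (-(k : ℤ)) = (γ ^ k)⁻¹ := by rw [zpow_neg, zpow_natCast]
  have hγmk : γ ^ m * (γ ^ k)⁻¹ = γ ^ (m - k) := by
    rw [← Nat.sub_add_cancel hkm, pow_add, Nat.add_sub_cancel,
      mul_inv_cancel_right₀ (pow_pos (by linarith) k).ne']
  have herror : (γ - δ) * ((G p q (m - k) : ℝ) - G p q m * γ ^ (-(k : ℤ))) =
      (1 + δ) * (δ ^ m * (γ ^ k)⁻¹ - δ ^ (m - k)) := by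
    rw [mul_sub, ← mul_assoc, binet, binet, hγk, ← hγmk]; ring
  have hbound : |δ ^ m * (γ ^ k)⁻¹ - δ ^ (m - k)| ≤ 2 := by
    have h₁ : |δ ^ m| ≤ 1 := by rw [abs_pow]; exact pow_le_one₀ (abs_nonneg δ) hδ
    have h₂ : |(γ ^ k)⁻¹| ≤ 1 := by
      rw [abs_inv, abs_of_pos (by positivity)]; exact inv_le_one_of_one_le₀ (one_le_pow₀ hγ)
    have h₃ : |δ ^ (m - k)| ≤ 1 := by rw [abs_pow]; exact pow_le_one₀ (abs_nonneg δ) hδ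
    calc |δ ^ m * (γ ^ k)⁻¹ - δ ^ (m - k)|
      _ ≤ |δ ^ m| * |(γ ^ k)⁻¹| + |δ ^ (m - k)| := by rw [← abs_mul]; exact abs_sub _ _
      _ ≤ 1 * 1 + 1 := by gcongr
      _ = 2 := by norm_num
  have hs : 0 < γ - δ := by linarith
  have hscaled :
      (γ - δ) * |(G p q (m - k) : ℝ) - G p q m * γ ^ (-(k : ℤ))| < (γ - δ) * (1 / 2) := by
    rw [← abs_of_pos hs, ← abs_mul, herror, abs_mul, abs_of_nonneg hδ₁, abs_of_pos hs]
    nlinarith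
  exact lt_of_mul_lt_mul_left hscaled hs.le

end G

lemma abs_sub_le_abs_sub_of_abs_sub_lt_half {a : ℤ} {x : ℝ} (ha : |a - x| < 1 / 2) (b : ℤ) :
    |a - x| ≤ |b - x| := by
  rcases eq_or_ne a b with rfl | hab
  · rfl
  · have hdist : (1 : ℝ) ≤ |(a : ℝ) - b| := by
      exact_mod_cast Int.one_le_abs (sub_ne_zero.mpr hab)
    have := abs_sub_le (a : ℝ) x b
    rw [abs_sub_comm x] at this
    linarith

/-- For all `m ≥ k ≥ 0` (with `1 ≤ q ≤ p` and `γ` the largest root of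
`x² − px − q`): `|G_{m−k}/G_m − γ^(−k)| < 1/G_m`, and the minimum over `0 ≤ i ≤ m` of
`|G_{m−i}/G_m − γ^(−k)|` is attained at `i = k`. -/
theorem statement19 (p q : ℕ) (hq : 1 ≤ q) (hpq : q ≤ p) (m k : ℕ) (hkm : k ≤ m) :
    |(G p q (m - k) : ℝ) / (G p q m : ℝ) - gam p q ^ (-(k : ℤ))| < 1 / (G p q m : ℝ) ∧
    ∀ i : ℕ, i ≤ m →
      |(G p q (m - k) : ℝ) / (G p q m : ℝ) - gam p q ^ (-(k : ℤ))| ≤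
        |(G p q (m - i) : ℝ) / (G p q m : ℝ) - gam p q ^ (-(k : ℤ))| := by
  have hGm : (0 : ℝ) < G p q m := by exact_mod_cast G.pos hq m
  have hkey := G.abs_sub_mul_zpow_gam_lt hq hpq hkm
  have hrescale (a : ℝ) : |a / G p q m - gam p q ^ (-(k : ℤ))| =
      |a - G p q m * gam p q ^ (-(k : ℤ))| / G p q m := by
    rw [← abs_of_pos hGm, ← abs_div, abs_of_pos hGm, sub_div, mul_div_cancel_left₀ _ hGm.ne']
  refine ⟨?_, fun i _ => ?_⟩
  · rw [hrescale, div_lt_div_iff_of_pos_right hGm]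
    linarith
  · rw [hrescale, hrescale]
    refine div_le_div_of_nonneg_right ?_ hGm.le
    exact_mod_cast abs_sub_le_abs_sub_of_abs_sub_lt_half (a := G p q (m - k))
      (by exact_mod_cast hkey) (G p q (m - i))
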